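/- arXiv:2306.00468 — 2 statements merged into one kernel-verified Lean document; each statement's English description precedes it below -/
import Mathlib

section
/- For every quintuple P of positive rationals and every finite composition g = γₜ∘⋯∘γ₁ where each γᵢ ∈ {α, β, α⁻¹, β⁻¹}, one has φ(g(P)) = g̃(φ(P)), where g̃ = γ̃ₜ∘⋯∘γ̃₁ is the corresponding composition with γ replaced by its tilde counterpart (α by α̃, β by β̃, and likewise for inverses). -/
abbrev Q5 := ℚ × ℚ × ℚ × ℚ × ℚ

/-- α(a,b,c,d,e) = (b, (b²+cd)/a, c, d, e) -/
def actAlpha : Q5 → Q5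
  | (a, b, c, d, e) => (b, (b ^ 2 + c * d) / a, c, d, e)

/-- β(a,b,c,d,e) = (b, c, (ac+be)/d, a, e) -/
def actBeta : Q5 → Q5
  | (a, b, c, d, e) => (b, c, (a * c + b * e) / d, a, e)

/-- α⁻¹(a,b,c,d,e) = ((a²+cd)/b, a, c, d, e) -/
def actAlphaInv : Q5 → Q5
  | (a, b, c, d, e) => ((a ^ 2 + c * d) / b, a, c, d, e)

/-- β⁻¹(a,b,c,d,e) = (d, a, b, (ae+bd)/c, e) -/
def actBetaInv : Q5 → Q5
  | (a, b, c, d, e) => (d, a, b, (a * e + b * d) / c, e)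

/-- Generators of the group G. -/
inductive Gen | A | B | Ainv | Binv

def Gen.app : Gen → Q5 → Q5
  | .A => actAlpha
  | .B => actBeta
  | .Ainv => actAlphaInv
  | .Binv => actBetaInv

/-- An element of G, given as a word in the generators, applied to a quintuple. -/
def applyWord (w : List Gen) (P : Q5) : Q5 := w.foldl (fun Q g => g.app Q) P

def Pos5 : Q5 → Prop
  | (a, b, c, d, e) => 0 < a ∧ 0 < b ∧ 0 < c ∧ 0 < d ∧ 0 < e
abbrev Q3 := ℚ × ℚ × ℚ

/-- α̃(x,y,z) = (x, z, xz−y) -/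
def tAlpha : Q3 → Q3
  | (x, y, z) => (x, z, x * z - y)

/-- β̃(x,y,z) = (y, z, x) -/
def tBeta : Q3 → Q3
  | (x, y, z) => (y, z, x)

/-- α̃⁻¹(x,y,z) = (x, xy−z, y) -/
def tAlphaInv : Q3 → Q3
  | (x, y, z) => (x, x * y - z, y)

/-- β̃⁻¹(x,y,z) = (z, x, y) -/
def tBetaInv : Q3 → Q3
  | (x, y, z) => (z, x, y)

/-- Generators of the group G̃. -/
inductive TGen | A | B | Ainv | Binv

def TGen.app : TGen → Q3 → Q3
  | .A => tAlpha
  | .B => tBeta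
  | .Ainv => tAlphaInv
  | .Binv => tBetaInv

/-- An element of G̃, given as a word in the generators, applied to a triple. -/
def applyTWord (w : List TGen) (p : Q3) : Q3 := w.foldl (fun q g => g.app q) p
def phiC0 : Q5 → ℚ
  | (a, b, c, d, _) => (a ^ 2 + b ^ 2 + c * d) / (a * b)

def phiC1 : Q5 → ℚ
  | (a, b, c, d, e) => (c ^ 2 * d + a ^ 2 * c + b ^ 2 * d + a * b * e) / (b * c * d)

def phiC2 : Q5 → ℚ
  | (a, b, c, d, e) => (c * d ^ 2 + a ^ 2 * c + b ^ 2 * d + a * b * e) / (a * c * d)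

def phi (P : Q5) : ℚ × ℚ × ℚ := (phiC0 P, phiC1 P, phiC2 P)

/-- The tilde counterpart of a generator of G: α ↦ α̃, β ↦ β̃, α⁻¹ ↦ α̃⁻¹, β⁻¹ ↦ β̃⁻¹. -/
def Gen.tilde : Gen → TGen
  | .A => .A
  | .B => .B
  | .Ainv => .Ainv
  | .Binv => .Binv


/-!
Each generator acts on φ through a direct rational-function identity: α, β, α⁻¹, β⁻¹ are
intertwined with α̃, β̃, α̃⁻¹, β̃⁻¹ as soon as all denominators involved are nonzero.
Since the generators preserve positivity, this holds at every point of the orbit of a positive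
quintuple, and the theorem follows by induction on the word.
-/

section OneStep

variable {a b c d e : ℚ}

theorem phi_actAlpha (ha : a ≠ 0) (hb : b ≠ 0) (hc : c ≠ 0) (hd : d ≠ 0)
    (hnum : b ^ 2 + c * d ≠ 0) :
    phi (actAlpha (a, b, c, d, e)) = tAlpha (phi (a, b, c, d, e)) := by
  simp only [actAlpha, tAlpha, phi, phiC0, phiC1, phiC2, Prod.mk.injEq]
  refine ⟨?_, ?_, ?_⟩ <;> field_simp <;> ring

theorem phi_actBeta (ha : a ≠ 0) (hb : b ≠ 0) (hc : c ≠ 0) (hd : d ≠ 0)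
    (hnum : a * c + b * e ≠ 0) :
    phi (actBeta (a, b, c, d, e)) = tBeta (phi (a, b, c, d, e)) := by
  simp only [actBeta, tBeta, phi, phiC0, phiC1, phiC2, Prod.mk.injEq]
  refine ⟨?_, ?_, ?_⟩ <;> field_simp <;> ring

theorem phi_actAlphaInv (ha : a ≠ 0) (hb : b ≠ 0) (hc : c ≠ 0) (hd : d ≠ 0)
    (hnum : a ^ 2 + c * d ≠ 0) :
    phi (actAlphaInv (a, b, c, d, e)) = tAlphaInv (phi (a, b, c, d, e)) := by
  simp only [actAlphaInv, tAlphaInv, phi, phiC0, phiC1, phiC2, Prod.mk.injEq]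
  refine ⟨?_, ?_, ?_⟩ <;> field_simp <;> ring

theorem phi_actBetaInv (ha : a ≠ 0) (hb : b ≠ 0) (hc : c ≠ 0) (hd : d ≠ 0)
    (hnum : a * e + b * d ≠ 0) :
    phi (actBetaInv (a, b, c, d, e)) = tBetaInv (phi (a, b, c, d, e)) := by
  simp only [actBetaInv, tBetaInv, phi, phiC0, phiC1, phiC2, Prod.mk.injEq]
  refine ⟨?_, ?_, ?_⟩ <;> field_simp <;> ring

end OneStep

theorem Pos5.app {P : Q5} (hP : Pos5 P) (g : Gen) : Pos5 (g.app P) := by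
  obtain ⟨a, b, c, d, e⟩ := P
  obtain ⟨ha, hb, hc, hd, he⟩ := hP
  cases g <;> exact ⟨by positivity, by positivity, by positivity, by positivity, by positivity⟩

theorem Pos5.phi_app {P : Q5} (hP : Pos5 P) (g : Gen) :
    phi (g.app P) = g.tilde.app (phi P) := by
  obtain ⟨a, b, c, d, e⟩ := P
  obtain ⟨ha, hb, hc, hd, he⟩ := hP
  cases g
  · exact phi_actAlpha ha.ne' hb.ne' hc.ne' hd.ne' (by positivity)
  · exact phi_actBeta ha.ne' hb.ne' hc.ne' hd.ne' (by positivity)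
  · exact phi_actAlphaInv ha.ne' hb.ne' hc.ne' hd.ne' (by positivity)
  · exact phi_actBetaInv ha.ne' hb.ne' hc.ne' hd.ne' (by positivity)

/-- φ(g(P)) = g̃(φ(P)) for every finite composition g of α, β, α⁻¹, β⁻¹. -/
theorem phi_commutes_with_G (P : Q5) (hP : Pos5 P) (w : List Gen) :
    phi (applyWord w P) = applyTWord (w.map Gen.tilde) (phi P) := by
  induction w generalizing P with
  | nil => rfl
  | cons g w ih =>
    calc phi (applyWord w (g.app P))
        = applyTWord (w.map Gen.tilde) (phi (g.app P)) := ih _ (hP.app g)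
      _ = applyTWord (w.map Gen.tilde) (g.tilde.app (phi P)) := by rw [hP.phi_app g]
end

section
/- Fix a positive integer ε. Let P = (a,b,c,d,ε) be a quintuple of positive integers such that all three components of φ(P) are positive integers and ε divides a, b, c, d. Then for every element g of the group G (i.e., every finite composition of α, β, α⁻¹, β⁻¹), all five components of g(P) are positive integers divisible by ε, and all three components of φ(g(P)) are positive integers. -/
/-- `q` is a positive integer. -/
def IsPosInt (q : ℚ) : Prop := ∃ k : ℕ, 0 < k ∧ q = (k : ℚ)

/-- `q` is a positive integer divisible by `ε`. -/
def IsPosMultOf (ε : ℕ) (q : ℚ) : Prop := ∃ k : ℕ, 0 < k ∧ q = ((ε * k : ℕ) : ℚ)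

/-!
Both generators and their inverses replace one coordinate by a quotient, but on a positive
point these quotients are exact linear combinations of the old coordinates with coefficients
in `φ`; e.g. `(b² + cd)/a = C₀ b - a` and `(ac + be)/d = a - C₀ b + C₂ c`. Moreover `φ` itself
transforms polynomially: `β` permutes `(C₀, C₁, C₂)` cyclically, and `α` sends it to
`(C₀, C₂, C₀ C₂ - C₁)`. Hence "coordinates in `εℤ` and `φ` in `ℤ`" is preserved along the
orbit, while positivity is preserved because the defining formulas are subtraction-free.
-/

open AddSubgroup

lemma mul_mem_zmultiples_of_mem_bot {R : Type*} [Ring R] {x y r : R}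
    (hx : x ∈ (⊥ : Subring R)) (hy : y ∈ zmultiples r) : x * y ∈ zmultiples r := by
  obtain ⟨n, rfl⟩ := Subring.mem_bot.1 hx
  rw [← zsmul_eq_mul]
  exact zsmul_mem hy n

lemma natCast_mem_zmultiples_of_dvd {R : Type*} [Ring R] {m n : ℕ} (h : m ∣ n) :
    (n : R) ∈ zmultiples (m : R) := by
  obtain ⟨k, rfl⟩ := h
  exact mem_zmultiples_iff.2 ⟨k, by simpa using Nat.cast_comm k (m : R)⟩

lemma isPosInt_iff {q : ℚ} : IsPosInt q ↔ 0 < q ∧ q ∈ (⊥ : Subring ℚ) := by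
  constructor
  · rintro ⟨k, hk, rfl⟩
    exact ⟨by exact_mod_cast hk, Subring.mem_bot.2 ⟨k, by norm_cast⟩⟩
  · rintro ⟨hq, hmem⟩
    obtain ⟨n, rfl⟩ := Subring.mem_bot.1 hmem
    lift n to ℕ using by exact_mod_cast hq.le
    exact ⟨n, by exact_mod_cast hq, by norm_cast⟩

lemma IsPosMultOf.of_mem_zmultiples {ε : ℕ} {q : ℚ} (hq : 0 < q)
    (hmem : q ∈ zmultiples (ε : ℚ)) : IsPosMultOf ε q := by
  obtain ⟨n, rfl⟩ := mem_zmultiples_iff.1 hmem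
  rw [zsmul_eq_mul] at hq ⊢
  have hn : 0 < n := by exact_mod_cast pos_of_mul_pos_left hq (Nat.cast_nonneg ε)
  lift n to ℕ using hn.le
  exact ⟨n, by exact_mod_cast hn, by push_cast; ring⟩

section Formulas

variable {a b c d e : ℚ}

lemma Pos5.phi_pos (h : Pos5 (a, b, c, d, e)) :
    0 < phiC0 (a, b, c, d, e) ∧ 0 < phiC1 (a, b, c, d, e) ∧ 0 < phiC2 (a, b, c, d, e) := by
  obtain ⟨ha, hb, hc, hd, he⟩ := h
  refine ⟨?_, ?_, ?_⟩ <;> simp only [phiC0, phiC1, phiC2] <;> positivity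

lemma actAlpha_eq_phi (h : Pos5 (a, b, c, d, e)) :
    actAlpha (a, b, c, d, e) = (b, phiC0 (a, b, c, d, e) * b - a, c, d, e) := by
  obtain ⟨ha, hb, hc, hd, he⟩ := h
  simp only [actAlpha, phiC0, Prod.mk.injEq, true_and, and_true]
  field_simp
  ring

lemma actAlphaInv_eq_phi (h : Pos5 (a, b, c, d, e)) :
    actAlphaInv (a, b, c, d, e) = (phiC0 (a, b, c, d, e) * a - b, a, c, d, e) := by
  obtain ⟨ha, hb, hc, hd, he⟩ := h
  simp only [actAlphaInv, phiC0, Prod.mk.injEq, and_true]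
  field_simp
  ring

lemma actBeta_eq_phi (h : Pos5 (a, b, c, d, e)) :
    actBeta (a, b, c, d, e) =
      (b, c, a - phiC0 (a, b, c, d, e) * b + phiC2 (a, b, c, d, e) * c, a, e) := by
  obtain ⟨ha, hb, hc, hd, he⟩ := h
  simp only [actBeta, phiC0, phiC2, Prod.mk.injEq, true_and, and_true]
  field_simp
  ring

lemma actBetaInv_eq_phi (h : Pos5 (a, b, c, d, e)) :
    actBetaInv (a, b, c, d, e) =
      (d, a, b, b - phiC0 (a, b, c, d, e) * a + phiC1 (a, b, c, d, e) * d, e) := by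
  obtain ⟨ha, hb, hc, hd, he⟩ := h
  simp only [actBetaInv, phiC0, phiC1, Prod.mk.injEq, true_and, and_true]
  field_simp
  ring

lemma phi_actAlpha_s17 (h : Pos5 (a, b, c, d, e)) :
    phi (actAlpha (a, b, c, d, e)) =
      (phiC0 (a, b, c, d, e), phiC2 (a, b, c, d, e),
        phiC0 (a, b, c, d, e) * phiC2 (a, b, c, d, e) - phiC1 (a, b, c, d, e)) := by
  obtain ⟨ha, hb, hc, hd, he⟩ := h
  simp only [phi, actAlpha, phiC0, phiC1, phiC2, Prod.mk.injEq]
  refine ⟨?_, ?_, ?_⟩ <;> field_simp <;> ring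

lemma phi_actAlphaInv_s17 (h : Pos5 (a, b, c, d, e)) :
    phi (actAlphaInv (a, b, c, d, e)) =
      (phiC0 (a, b, c, d, e),
        phiC0 (a, b, c, d, e) * phiC1 (a, b, c, d, e) - phiC2 (a, b, c, d, e),
        phiC1 (a, b, c, d, e)) := by
  obtain ⟨ha, hb, hc, hd, he⟩ := h
  simp only [phi, actAlphaInv, phiC0, phiC1, phiC2, Prod.mk.injEq]
  refine ⟨?_, ?_, ?_⟩ <;> field_simp <;> ring

lemma phi_actBeta_s17 (h : Pos5 (a, b, c, d, e)) :
    phi (actBeta (a, b, c, d, e)) =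
      (phiC1 (a, b, c, d, e), phiC2 (a, b, c, d, e), phiC0 (a, b, c, d, e)) := by
  obtain ⟨ha, hb, hc, hd, he⟩ := h
  simp only [phi, actBeta, phiC0, phiC1, phiC2, Prod.mk.injEq]
  refine ⟨?_, ?_, ?_⟩ <;> field_simp <;> ring

lemma phi_actBetaInv_s17 (h : Pos5 (a, b, c, d, e)) :
    phi (actBetaInv (a, b, c, d, e)) =
      (phiC2 (a, b, c, d, e), phiC0 (a, b, c, d, e), phiC1 (a, b, c, d, e)) := by
  obtain ⟨ha, hb, hc, hd, he⟩ := h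
  simp only [phi, actBetaInv, phiC0, phiC1, phiC2, Prod.mk.injEq]
  refine ⟨?_, ?_, ?_⟩ <;> field_simp <;> ring

end Formulas

lemma Pos5.gen_app {P : Q5} (g : Gen) (h : Pos5 P) : Pos5 (g.app P) := by
  obtain ⟨a, b, c, d, e⟩ := P
  obtain ⟨ha, hb, hc, hd, he⟩ := h
  cases g <;> exact ⟨by positivity, by positivity, by positivity, by positivity, by positivity⟩

def IsLatticePoint (ε : ℕ) (P : Q5) : Prop :=
  P ∈ (zmultiples (ε : ℚ) : Set ℚ) ×ˢ (zmultiples (ε : ℚ) : Set ℚ) ×ˢ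
      (zmultiples (ε : ℚ) : Set ℚ) ×ˢ (zmultiples (ε : ℚ) : Set ℚ) ×ˢ
      (zmultiples (ε : ℚ) : Set ℚ) ∧
    phi P ∈ ((⊥ : Subring ℚ) : Set ℚ) ×ˢ ((⊥ : Subring ℚ) : Set ℚ) ×ˢ ((⊥ : Subring ℚ) : Set ℚ)

lemma IsLatticePoint.gen_app {ε : ℕ} {P : Q5} (g : Gen) (hP : Pos5 P)
    (h : IsLatticePoint ε P) : IsLatticePoint ε (g.app P) := by
  obtain ⟨a, b, c, d, e⟩ := P
  obtain ⟨⟨ha, hb, hc, hd, he⟩, h₀, h₁, h₂⟩ := h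
  have zmul {x y : ℚ} (hx : x ∈ (⊥ : Subring ℚ)) (hy : y ∈ zmultiples (ε : ℚ)) :
      x * y ∈ zmultiples (ε : ℚ) :=
    mul_mem_zmultiples_of_mem_bot hx hy
  cases g
  · rw [Gen.app, IsLatticePoint, phi_actAlpha_s17 hP, actAlpha_eq_phi hP]
    exact ⟨⟨hb, sub_mem (zmul h₀ hb) ha, hc, hd, he⟩, h₀, h₂, sub_mem (mul_mem h₀ h₂) h₁⟩
  · rw [Gen.app, IsLatticePoint, phi_actBeta_s17 hP, actBeta_eq_phi hP]
    exact ⟨⟨hb, hc, add_mem (sub_mem ha (zmul h₀ hb)) (zmul h₂ hc), ha, he⟩, h₁, h₂, h₀⟩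
  · rw [Gen.app, IsLatticePoint, phi_actAlphaInv_s17 hP, actAlphaInv_eq_phi hP]
    exact ⟨⟨sub_mem (zmul h₀ ha) hb, ha, hc, hd, he⟩, h₀, sub_mem (mul_mem h₀ h₁) h₂, h₁⟩
  · rw [Gen.app, IsLatticePoint, phi_actBetaInv_s17 hP, actBetaInv_eq_phi hP]
    exact ⟨⟨hd, ha, hb, add_mem (sub_mem hb (zmul h₀ ha)) (zmul h₁ hd), he⟩, h₂, h₀, h₁⟩

lemma pos5_and_isLatticePoint_applyWord {ε : ℕ} (w : List Gen) {P : Q5} (hP : Pos5 P)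
    (h : IsLatticePoint ε P) : Pos5 (applyWord w P) ∧ IsLatticePoint ε (applyWord w P) := by
  induction w generalizing P with
  | nil => exact ⟨hP, h⟩
  | cons g w ih => exact ih (hP.gen_app g) (h.gen_app g hP)

/-- if P = (a,b,c,d,ε) is a quintuple of positive integers with φ(P) ∈ ℕ₊³ and
ε ∣ a,b,c,d, then for every g ∈ G all five components of g(P) are positive integers divisible
by ε and all three components of φ(g(P)) are positive integers. -/
theorem orbit_preserves_integrality (ε : ℕ) (hε : 0 < ε) (a b c d : ℕ)
    (ha : 0 < a) (hb : 0 < b) (hc : 0 < c) (hd : 0 < d)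
    (hda : ε ∣ a) (hdb : ε ∣ b) (hdc : ε ∣ c) (hdd : ε ∣ d)
    (hphi0 : IsPosInt (phiC0 ((a : ℚ), (b : ℚ), (c : ℚ), (d : ℚ), (ε : ℚ))))
    (hphi1 : IsPosInt (phiC1 ((a : ℚ), (b : ℚ), (c : ℚ), (d : ℚ), (ε : ℚ))))
    (hphi2 : IsPosInt (phiC2 ((a : ℚ), (b : ℚ), (c : ℚ), (d : ℚ), (ε : ℚ))))
    (w : List Gen) :
    (IsPosMultOf ε (applyWord w ((a : ℚ), (b : ℚ), (c : ℚ), (d : ℚ), (ε : ℚ))).1 ∧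
     IsPosMultOf ε (applyWord w ((a : ℚ), (b : ℚ), (c : ℚ), (d : ℚ), (ε : ℚ))).2.1 ∧
     IsPosMultOf ε (applyWord w ((a : ℚ), (b : ℚ), (c : ℚ), (d : ℚ), (ε : ℚ))).2.2.1 ∧
     IsPosMultOf ε (applyWord w ((a : ℚ), (b : ℚ), (c : ℚ), (d : ℚ), (ε : ℚ))).2.2.2.1 ∧
     IsPosMultOf ε (applyWord w ((a : ℚ), (b : ℚ), (c : ℚ), (d : ℚ), (ε : ℚ))).2.2.2.2) ∧
    (IsPosInt (phiC0 (applyWord w ((a : ℚ), (b : ℚ), (c : ℚ), (d : ℚ), (ε : ℚ)))) ∧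
     IsPosInt (phiC1 (applyWord w ((a : ℚ), (b : ℚ), (c : ℚ), (d : ℚ), (ε : ℚ)))) ∧
     IsPosInt (phiC2 (applyWord w ((a : ℚ), (b : ℚ), (c : ℚ), (d : ℚ), (ε : ℚ))))) := by
  set P : Q5 := ((a : ℚ), (b : ℚ), (c : ℚ), (d : ℚ), (ε : ℚ))
  have hP : Pos5 P := by refine ⟨?_, ?_, ?_, ?_, ?_⟩ <;> positivity
  have hL : IsLatticePoint ε P :=
    ⟨⟨natCast_mem_zmultiples_of_dvd hda, natCast_mem_zmultiples_of_dvd hdb,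
        natCast_mem_zmultiples_of_dvd hdc, natCast_mem_zmultiples_of_dvd hdd,
        mem_zmultiples _⟩,
      (isPosInt_iff.1 hphi0).2, (isPosInt_iff.1 hphi1).2, (isPosInt_iff.1 hphi2).2⟩
  obtain ⟨hQ, hQL⟩ := pos5_and_isLatticePoint_applyWord w hP hL
  generalize applyWord w P = Q at hQ hQL ⊢
  obtain ⟨a', b', c', d', e'⟩ := Q
  obtain ⟨φ₀, φ₁, φ₂⟩ := hQ.phi_pos
  obtain ⟨pa, pb, pc, pd, pe⟩ := hQ
  obtain ⟨⟨ma, mb, mc, md, me⟩, z₀, z₁, z₂⟩ := hQL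
  exact ⟨⟨.of_mem_zmultiples pa ma, .of_mem_zmultiples pb mb, .of_mem_zmultiples pc mc,
      .of_mem_zmultiples pd md, .of_mem_zmultiples pe me⟩,
    isPosInt_iff.2 ⟨φ₀, z₀⟩, isPosInt_iff.2 ⟨φ₁, z₁⟩, isPosInt_iff.2 ⟨φ₂, z₂⟩⟩
end
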